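/- Suppose a sequence of edge-disjoint directed paths P_0, P_1, ..., P_{T-1} decomposes a digraph G, and for each t the path P_t is given weight under the weighting w_t(v,u) = 1/d^+_{G_t}(v), where G_t = G minus the edges of P_0, ..., P_{t-1}. Then the total weight ∑_t w_t(P_t) equals ∑_{v ∈ V} ∑_{i=1}^{d^+_G(v)} 1/i. -/

import Mathlib

open Finset

variable {V : Type*} [Fintype V] [DecidableEq V]

/-- Out-degree of `v` in the digraph with edge set `E`. -/
def outDeg (E : Finset (V × V)) (v : V) : ℕ := (E.filter (fun e => e.1 = v)).card

/-- In-degree of `v` in the digraph with edge set `E`. -/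
def inDeg (E : Finset (V × V)) (v : V) : ℕ := (E.filter (fun e => e.2 = v)).card

/-- The list of edges traversed by a list of vertices. -/
def pathEdges (p : List V) : List (V × V) := p.zip p.tail

/-- `p` is a directed path in the digraph `E`: distinct vertices, consecutive edges. -/
def IsPath (E : Finset (V × V)) (p : List V) : Prop :=
  p.Nodup ∧ List.Chain' (fun a b => (a, b) ∈ E) p

/-- The digraph remaining after removing the edges of the first `t` paths. -/
def rem (E : Finset (V × V)) (P : ℕ → List V) (t : ℕ) : Finset (V × V) :=
  E \ (Finset.range t).biUnion (fun i => (pathEdges (P i)).toFinset)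

/-! The potential `Φ(G) = ∑_v H_{d⁺_G(v)}`, with `H_n` the `n`-th harmonic number, pays for the
paths: removing `P_t` from `G_t` lowers `d⁺(v)` by one exactly at the vertices of `P_t` other
than its last one, which lowers `H_{d⁺(v)}` by `1 / d⁺_{G_t}(v)`, the weight of `P_t` at `v`.
Hence `w_t(P_t) = Φ(G_t) - Φ(G_{t+1})`, and the total weight telescopes to
`Φ(G) - Φ(∅) = Φ(G)`. -/

omit [Fintype V] [DecidableEq V] in
theorem map_fst_pathEdges : ∀ p : List V, (pathEdges p).map Prod.fst = p.dropLast
  | [] | [_] => rfl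
  | a :: b :: l => by
      simpa [pathEdges] using map_fst_pathEdges (b :: l)

omit [Fintype V] [DecidableEq V] in
theorem mem_of_mem_pathEdges {E : Finset (V × V)} :
    ∀ {p : List V}, List.IsChain (fun a b => (a, b) ∈ E) p → ∀ e ∈ pathEdges p, e ∈ E
  | [], _, _, he | [_], _, _, he => by simp [pathEdges] at he
  | a :: b :: l, h, e, he => by
      rw [List.isChain_cons_cons] at h
      change e ∈ (a, b) :: pathEdges (b :: l) at he
      rcases List.mem_cons.1 he with rfl | he
      · exact h.1
      · exact mem_of_mem_pathEdges h.2 e he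

omit [Fintype V] in
theorem outDeg_le_outDeg {S A : Finset (V × V)} (h : S ⊆ A) (v : V) :
    outDeg S v ≤ outDeg A v :=
  card_le_card (filter_subset_filter _ h)

omit [Fintype V] in
theorem outDeg_sdiff {S A : Finset (V × V)} (h : S ⊆ A) (v : V) :
    outDeg (A \ S) v = outDeg A v - outDeg S v := by
  have hfilter : (A \ S).filter (·.1 = v) = A.filter (·.1 = v) \ S.filter (·.1 = v) := by
    ext e; simp only [mem_filter, mem_sdiff]; tauto
  rw [outDeg, hfilter, card_sdiff_of_subset (filter_subset_filter _ h)]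
  rfl

omit [Fintype V] in
theorem outDeg_pathEdges {p : List V} (hp : p.Nodup) (v : V) :
    outDeg (pathEdges p).toFinset v = p.dropLast.count v := by
  have hnodup : (pathEdges p).Nodup :=
    List.Nodup.of_map Prod.fst ((map_fst_pathEdges p).symm ▸ hp.sublist (List.dropLast_sublist p))
  rw [outDeg, List.filter_toFinset, List.card_toFinset, (hnodup.filter _).dedup,
    ← List.countP_eq_length_filter, ← map_fst_pathEdges, List.count, List.countP_map]
  rfl

theorem harmonic_sub_harmonic_pred {n : ℕ} (hn : 0 < n) :
    (harmonic n : ℝ) - harmonic (n - 1) = 1 / n := by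
  obtain ⟨m, rfl⟩ := Nat.exists_eq_add_of_lt hn
  simp [harmonic_succ]

noncomputable def harmonicPotential (A : Finset (V × V)) : ℝ :=
  ∑ v : V, (harmonic (outDeg A v) : ℝ)

theorem sum_pathEdges_inv_outDeg {A : Finset (V × V)} {p : List V} (hp : IsPath A p) :
    ((pathEdges p).map fun e => 1 / (outDeg A e.1 : ℝ)).sum =
      harmonicPotential A - harmonicPotential (A \ (pathEdges p).toFinset) := by
  have hsub : (pathEdges p).toFinset ⊆ A := fun e he =>
    mem_of_mem_pathEdges hp.2 e (List.mem_toFinset.1 he)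
  have hnodup : p.dropLast.Nodup := hp.1.sublist (List.dropLast_sublist p)
  have hweights : (pathEdges p).map (fun e => 1 / (outDeg A e.1 : ℝ)) =
      p.dropLast.map fun v => 1 / (outDeg A v : ℝ) := by
    rw [← map_fst_pathEdges, List.map_map]
    rfl
  rw [hweights, ← List.sum_toFinset _ hnodup, harmonicPotential, harmonicPotential,
    ← sum_sub_distrib, ← sum_subset (subset_univ _)]
  · refine sum_congr rfl fun v hv => ?_
    have hcount := outDeg_pathEdges hp.1 v
    rw [List.count_eq_one_of_mem hnodup (List.mem_toFinset.1 hv)] at hcount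
    have hpos : 1 ≤ outDeg A v := by simpa [hcount] using outDeg_le_outDeg hsub v
    rw [outDeg_sdiff hsub, hcount, harmonic_sub_harmonic_pred hpos]
  · intro v _ hv
    rw [outDeg_sdiff hsub, outDeg_pathEdges hp.1,
      List.count_eq_zero_of_not_mem (mt List.mem_toFinset.2 hv), Nat.sub_zero, sub_self]

omit [Fintype V] in
theorem rem_succ (E : Finset (V × V)) (P : ℕ → List V) (t : ℕ) :
    rem E P (t + 1) = rem E P t \ (pathEdges (P t)).toFinset := by
  rw [rem, rem, range_add_one, biUnion_insert, union_comm, sdiff_union_distrib,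
    Finset.sdiff_sdiff_left']

/-- If the paths `P 0, …, P (T-1)` decompose `E` (each `P t` being a
path in the remaining graph `rem E P t`, with nothing left at time `T`), and each
edge of `P t` gets weight `1 / d⁺(v)` in the remaining graph, then the total weight
of all paths equals `∑_v ∑_{i=1}^{d⁺_E(v)} 1/i`. -/
theorem stmt_14 (E : Finset (V × V)) (T : ℕ) (P : ℕ → List V)
    (hpath : ∀ t < T, IsPath (rem E P t) (P t))
    (hempty : rem E P T = ∅) :
    ∑ t ∈ Finset.range T,
        ((pathEdges (P t)).map (fun e => 1 / (outDeg (rem E P t) e.1 : ℝ))).sum =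
      ∑ v : V, ∑ i ∈ Finset.Icc 1 (outDeg E v), (1 : ℝ) / i := by
  have hstep : ∀ t ∈ range T,
      ((pathEdges (P t)).map fun e => 1 / (outDeg (rem E P t) e.1 : ℝ)).sum =
        harmonicPotential (rem E P t) - harmonicPotential (rem E P (t + 1)) := fun t ht => by
    rw [rem_succ, sum_pathEdges_inv_outDeg (hpath t (mem_range.1 ht))]
  rw [sum_congr rfl hstep, sum_range_sub' (fun t => harmonicPotential (rem E P t)), hempty]
  simp [harmonicPotential, rem, outDeg, harmonic_eq_sum_Icc]
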